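/- arXiv:2604.20471 — 9 statements merged into one kernel-verified Lean document; each statement's English description precedes it below -/
import Mathlib

section
/- Let X be a normed space satisfying the Opial condition, and let Σ = {x_n} be a sequence in X. Suppose w ∈ X is a weak accumulation point of Σ (i.e., some subsequence x_{n_k} converges weakly to w) and w ∈ Λ(Σ), where Λ(Σ) = {z ∈ X : lim_{n→∞} ‖x_n − z‖ exists}. Then for every z ∈ Λ(Σ) with z ≠ w, one has ψ_Σ(w) < ψ_Σ(z), where ψ_Σ(z) := lim_{n→∞} ‖x_n − z‖. In particular, w is the unique global minimizer of ψ_Σ on Λ(Σ). -/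
open Filter Topology

/-- In an Opial normed space, a weak accumulation point `w` of a
sequence `Σ` that belongs to `Λ(Σ)` is the strict minimizer of `ψ_Σ` on `Λ(Σ)`. -/
theorem stmt_0 {X : Type*} [NormedAddCommGroup X] [NormedSpace ℝ X]
    (opial : ∀ (u : ℕ → X) (p : X),
      (∀ φ : X →L[ℝ] ℝ, Tendsto (fun n => φ (u n)) atTop (𝓝 (φ p))) →
      ∀ z, z ≠ p →
        Filter.liminf (fun n => ‖u n - p‖) atTop < Filter.liminf (fun n => ‖u n - z‖) atTop)
    (x : ℕ → X) (w : X)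
    (nk : ℕ → ℕ) (hnk : StrictMono nk)
    (hweak : ∀ φ : X →L[ℝ] ℝ, Tendsto (fun k => φ (x (nk k))) atTop (𝓝 (φ w)))
    (lw : ℝ) (hlw : Tendsto (fun n => ‖x n - w‖) atTop (𝓝 lw)) :
    ∀ z lz, z ≠ w → Tendsto (fun n => ‖x n - z‖) atTop (𝓝 lz) → lw < lz := by
  intro z lz hz hlz
  have hw_sub : Tendsto (fun k => ‖x (nk k) - w‖) atTop (𝓝 lw) := hlw.comp hnk.tendsto_atTop
  have hz_sub : Tendsto (fun k => ‖x (nk k) - z‖) atTop (𝓝 lz) := hlz.comp hnk.tendsto_atTop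
  simpa only [hw_sub.liminf_eq, hz_sub.liminf_eq] using opial (fun k => x (nk k)) w hweak z hz
end

section
/- In the real Hilbert space ℓ²(ℝ) with canonical orthonormal basis {e_n}, define x_n = e_n if n is even and x_n = 2 e_n if n is odd. Then x_n converges weakly to 0, but for every z ∈ ℓ²(ℝ) the limit lim_{n→∞} ‖x_n − z‖ does not exist; i.e., Λ(Σ) = ∅ even though Σ converges weakly. -/
open Filter Topology

private lemma coord_tendsto_zero (z : lp (fun _ : ℕ => ℝ) 2) :
    Tendsto (fun n => (z : ∀ _ : ℕ, ℝ) n) atTop (𝓝 0) := by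
  have hs : Summable fun i => ‖(z : ∀ _ : ℕ, ℝ) i‖ ^ (2 : ENNReal).toReal :=
    Memℓp.summable (by norm_num) (lp.memℓp z)
  have h0 : Tendsto (fun i => ‖(z : ∀ _ : ℕ, ℝ) i‖ ^ (2 : ENNReal).toReal) atTop (𝓝 0) :=
    hs.tendsto_atTop_zero
  have h1 : Tendsto (fun i => ‖(z : ∀ _ : ℕ, ℝ) i‖) atTop (𝓝 0) := by
    have h2 := (Real.continuous_sqrt.tendsto 0).comp h0
    simp only [Real.sqrt_zero] at h2
    convert h2 using 2 with i
    rw [Function.comp_apply, show ((2 : ENNReal).toReal) = (2 : ℝ) by norm_num,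
      Real.rpow_two, Real.sqrt_sq (norm_nonneg _)]
  exact tendsto_zero_iff_norm_tendsto_zero.mpr h1

/-- In `ℓ²(ℝ)`, the sequence `x n = e n` (n even), `x n = 2 e n`
(n odd) converges weakly to `0`, yet `lim ‖x n - z‖` exists for no `z`. -/
theorem stmt_3
    (e : ℕ → lp (fun _ : ℕ => ℝ) 2) (he : ∀ n, e n = lp.single 2 n (1 : ℝ))
    (x : ℕ → lp (fun _ : ℕ => ℝ) 2)
    (hx : ∀ n, x n = if Even n then e n else (2 : ℝ) • e n) :
    (∀ φ : lp (fun _ : ℕ => ℝ) 2 →L[ℝ] ℝ,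
        Tendsto (fun n => φ (x n)) atTop (𝓝 (φ 0))) ∧
    (∀ z : lp (fun _ : ℕ => ℝ) 2, ¬ ∃ l : ℝ, Tendsto (fun n => ‖x n - z‖) atTop (𝓝 l)) := by
  have hnorm_e : ∀ n, ‖e n‖ = 1 := by
    intro n
    rw [he n]
    simpa using lp.norm_single (p := 2) (by norm_num) (fun _ : ℕ => (1 : ℝ)) n
  have hinner : ∀ n (z : lp (fun _ : ℕ => ℝ) 2),
      (inner ℝ (e n) z : ℝ) = (z : ∀ _ : ℕ, ℝ) n := by
    intro n z
    rw [he n, lp.inner_single_left]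
    simp [RCLike.inner_apply]
  constructor
  · intro φ
    set y := (InnerProductSpace.toDual ℝ (lp (fun _ : ℕ => ℝ) 2)).symm φ with hy
    have hφ : ∀ v, φ v = (inner ℝ y v : ℝ) := fun v =>
      (InnerProductSpace.toDual_symm_apply (𝕜 := ℝ)).symm
    have hyn : Tendsto (fun n => (y : ∀ _ : ℕ, ℝ) n) atTop (𝓝 0) := coord_tendsto_zero y
    have key : Tendsto (fun n => φ (x n)) atTop (𝓝 0) := by
      rw [tendsto_zero_iff_norm_tendsto_zero]
      apply squeeze_zero (fun n => norm_nonneg _)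
        (g := fun n => 2 * ‖(y : ∀ _ : ℕ, ℝ) n‖)
      · intro n
        rw [hφ, hx n]
        by_cases hn : Even n
        · rw [if_pos hn, real_inner_comm, hinner n y]
          have := norm_nonneg ((y : ∀ _ : ℕ, ℝ) n)
          linarith
        · rw [if_neg hn, inner_smul_right, real_inner_comm, hinner n y, norm_mul]
          simp
      · have := (tendsto_zero_iff_norm_tendsto_zero.mp hyn).const_mul (2 : ℝ)
        simpa using this
    simpa using key
  · intro z ⟨l, hl⟩
    have hzn : Tendsto (fun n => (z : ∀ _ : ℕ, ℝ) n) atTop (𝓝 0) := coord_tendsto_zero z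
    have hformula : ∀ n, ‖x n - z‖ =
        Real.sqrt ((if Even n then (1:ℝ) - 2 * (z : ∀ _ : ℕ, ℝ) n
          else 4 - 4 * (z : ∀ _ : ℕ, ℝ) n) + ‖z‖ ^ 2) := by
      intro n
      rw [← Real.sqrt_sq (norm_nonneg (x n - z))]
      congr 1
      rw [@norm_sub_sq_real, hx n]
      by_cases hn : Even n
      · rw [if_pos hn, if_pos hn, hnorm_e, hinner]
        ring
      · rw [if_neg hn, if_neg hn, norm_smul, inner_smul_left, hinner, hnorm_e]
        simp
        ring
    -- even subsequence
    have heven : Tendsto (fun k => ‖x (2 * k) - z‖) atTop (𝓝 (Real.sqrt (1 + ‖z‖ ^ 2))) := by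
      have h2k : Tendsto (fun k : ℕ => 2 * k) atTop atTop :=
        tendsto_atTop_atTop_of_monotone (fun a b h => by omega) (fun b => ⟨b, by omega⟩)
      have hz2 : Tendsto (fun k => (z : ∀ _ : ℕ, ℝ) (2 * k)) atTop (𝓝 0) := hzn.comp h2k
      have : Tendsto (fun k => Real.sqrt (1 - 2 * (z : ∀ _ : ℕ, ℝ) (2 * k) + ‖z‖ ^ 2))
          atTop (𝓝 (Real.sqrt (1 - 2 * 0 + ‖z‖ ^ 2))) :=
        (Real.continuous_sqrt.tendsto _).comp
          (((tendsto_const_nhds.sub (hz2.const_mul 2)).add tendsto_const_nhds))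
      simp only [mul_zero, sub_zero] at this
      convert this using 2 with k
      rw [hformula, if_pos ⟨k, by ring⟩]
    have hodd : Tendsto (fun k => ‖x (2 * k + 1) - z‖) atTop (𝓝 (Real.sqrt (4 + ‖z‖ ^ 2))) := by
      have h2k : Tendsto (fun k : ℕ => 2 * k + 1) atTop atTop :=
        tendsto_atTop_atTop_of_monotone (fun a b h => by omega) (fun b => ⟨b, by omega⟩)
      have hz2 : Tendsto (fun k => (z : ∀ _ : ℕ, ℝ) (2 * k + 1)) atTop (𝓝 0) := hzn.comp h2k
      have : Tendsto (fun k => Real.sqrt (4 - 4 * (z : ∀ _ : ℕ, ℝ) (2 * k + 1) + ‖z‖ ^ 2))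
          atTop (𝓝 (Real.sqrt (4 - 4 * 0 + ‖z‖ ^ 2))) :=
        (Real.continuous_sqrt.tendsto _).comp
          (((tendsto_const_nhds.sub (hz2.const_mul 4)).add tendsto_const_nhds))
      simp only [mul_zero, sub_zero] at this
      convert this using 2 with k
      rw [hformula, if_neg (by simp [Nat.even_add_one, parity_simps])]
    have h2k : Tendsto (fun k : ℕ => 2 * k) atTop atTop :=
      tendsto_atTop_atTop_of_monotone (fun a b h => by omega) (fun b => ⟨b, by omega⟩)
    have h2k1 : Tendsto (fun k : ℕ => 2 * k + 1) atTop atTop :=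
      tendsto_atTop_atTop_of_monotone (fun a b h => by omega) (fun b => ⟨b, by omega⟩)
    have e1 : Real.sqrt (1 + ‖z‖ ^ 2) = l := tendsto_nhds_unique heven (hl.comp h2k)
    have e2 : Real.sqrt (4 + ‖z‖ ^ 2) = l := tendsto_nhds_unique hodd (hl.comp h2k1)
    have : (1 : ℝ) + ‖z‖ ^ 2 = 4 + ‖z‖ ^ 2 := by
      have h1 : (0:ℝ) ≤ 1 + ‖z‖ ^ 2 := by positivity
      have h4 : (0:ℝ) ≤ 4 + ‖z‖ ^ 2 := by positivity
      have heq := congrArg (fun t => t ^ 2) (e1.trans e2.symm)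
      simpa [Real.sq_sqrt h1, Real.sq_sqrt h4] using heq
    linarith
end

section
/- Let M be a subset of a Banach space X and f : M → X a mapping. Fix y ∈ M and suppose there is a map D_y : X → X, a constant α_y ≤ 1, and remainder functions ω_y, ρ_y with ω_y(h) → 0 and ρ_y(h) → 0 as h ⇀ 0 weakly, such that: (i) ‖f(y+h) − f(y) − D_y(h)‖ ≤ (1 − α_y)‖h‖ + ω_y(h) for all h with y + h ∈ M, and (ii) ‖D_y(h)‖ ≤ α_y ‖h‖ + ρ_y(h) for all h ∈ X. Then for every sequence {y_n} ⊂ M with y_n ⇀ y weakly, one has liminf_{n→∞} ‖f(y_n) − f(y)‖ ≤ liminf_{n→∞} ‖y_n − y‖, i.e., f is weakly sequentially non-expansive at y. -/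
open Filter Topology

/-- A weakly convergent (to 0) sequence is norm-bounded (Banach–Steinhaus via the
double dual embedding). -/
lemma weak_null_bounded {X : Type*} [NormedAddCommGroup X] [NormedSpace ℝ X]
    (x : ℕ → X)
    (h : ∀ φ : X →L[ℝ] ℝ, Tendsto (fun n => φ (x n)) atTop (𝓝 0)) :
    ∃ C : ℝ, ∀ n, ‖x n‖ ≤ C := by
  have hb : ∀ φ : (X →L[ℝ] ℝ), ∃ C, ∀ n,
      ‖(NormedSpace.inclusionInDoubleDualLi ℝ (x n) : (X →L[ℝ] ℝ) →L[ℝ] ℝ) φ‖ ≤ C := by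
    intro φ
    have hbd := (h φ).isBoundedUnder_le.mono (le_refl _)
    obtain ⟨C, hC⟩ : ∃ C, ∀ n, |φ (x n)| ≤ C := by
      have := (h φ).bddAbove_range.union (h φ).bddBelow_range.neg
      -- use boundedness of a convergent sequence
      obtain ⟨C1, hC1⟩ := (h φ).bddAbove_range
      obtain ⟨C2, hC2⟩ := (h φ).bddBelow_range
      refine ⟨max C1 (-C2), fun n => abs_le.2 ⟨?_, ?_⟩⟩
      · have := hC2 ⟨n, rfl⟩
        linarith [le_max_right C1 (-C2)]
      · exact le_trans (hC1 ⟨n, rfl⟩) (le_max_left _ _)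
    exact ⟨C, fun n => by simpa [NormedSpace.inclusionInDoubleDualLi,
      NormedSpace.dual_def, Real.norm_eq_abs] using hC n⟩
  obtain ⟨C, hC⟩ := banach_steinhaus hb
  refine ⟨C, fun n => ?_⟩
  have := hC n
  rwa [(NormedSpace.inclusionInDoubleDualLi ℝ).norm_map (x n)] at this

/-- If `f` admits an approximation `D_y` with `‖f(y+h)-f(y)-D_y h‖ ≤
(1-α)‖h‖ + ω(h)` and `‖D_y h‖ ≤ α‖h‖ + ρ(h)`, `α ≤ 1`, where `ω, ρ → 0` along
weakly null sequences, then `f` is weakly sequentially non-expansive at `y`. -/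
theorem stmt_6 {X : Type*} [NormedAddCommGroup X] [NormedSpace ℝ X] [CompleteSpace X]
    (M : Set X) (f : X → X) (y : X) (hy : y ∈ M)
    (D : X → X) (α : ℝ) (hα : α ≤ 1) (ω ρ : X → ℝ)
    (hω : ∀ h : ℕ → X,
      (∀ φ : X →L[ℝ] ℝ, Tendsto (fun n => φ (h n)) atTop (𝓝 (φ 0))) →
      Tendsto (fun n => ω (h n)) atTop (𝓝 0))
    (hρ : ∀ h : ℕ → X,
      (∀ φ : X →L[ℝ] ℝ, Tendsto (fun n => φ (h n)) atTop (𝓝 (φ 0))) →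
      Tendsto (fun n => ρ (h n)) atTop (𝓝 0))
    (happrox : ∀ h : X, y + h ∈ M → ‖f (y + h) - f y - D h‖ ≤ (1 - α) * ‖h‖ + ω h)
    (hD : ∀ h : X, ‖D h‖ ≤ α * ‖h‖ + ρ h) :
    ∀ yn : ℕ → X, (∀ n, yn n ∈ M) →
      (∀ φ : X →L[ℝ] ℝ, Tendsto (fun n => φ (yn n)) atTop (𝓝 (φ y))) →
      Filter.liminf (fun n => ‖f (yn n) - f y‖) atTop ≤
        Filter.liminf (fun n => ‖yn n - y‖) atTop := by
  intro yn hmem hweak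
  set g : ℕ → X := fun n => yn n - y with hg
  have hgweak : ∀ φ : X →L[ℝ] ℝ, Tendsto (fun n => φ (g n)) atTop (𝓝 (φ 0)) := by
    intro φ
    have : Tendsto (fun n => φ (yn n) - φ y) atTop (𝓝 (φ y - φ y)) :=
      (hweak φ).sub tendsto_const_nhds
    simpa [hg, map_sub] using this
  -- key pointwise bound
  have key : ∀ n, ‖f (yn n) - f y‖ ≤ ‖g n‖ + (ω (g n) + ρ (g n)) := by
    intro n
    have hmem' : y + g n ∈ M := by simpa [hg] using hmem n
    have h1 := happrox (g n) hmem'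
    have h2 := hD (g n)
    have h3 : ‖f (y + g n) - f y‖ ≤ ‖f (y + g n) - f y - D (g n)‖ + ‖D (g n)‖ := by
      simpa using norm_add_le (f (y + g n) - f y - D (g n)) (D (g n))
    have : y + g n = yn n := by simp [hg]
    rw [this] at h3 h1
    nlinarith [norm_nonneg (g n)]
  -- e n → 0
  have he : Tendsto (fun n => ω (g n) + ρ (g n)) atTop (𝓝 0) := by
    simpa using (hω g hgweak).add (hρ g hgweak)
  -- boundedness of ‖g n‖
  obtain ⟨C, hC⟩ := weak_null_bounded g (by
    intro φ
    simpa using hgweak φ)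
  -- u bounded above
  obtain ⟨B, hB⟩ : ∃ B, ∀ n, ω (g n) + ρ (g n) ≤ B := by
    obtain ⟨B, hB⟩ := he.bddAbove_range
    exact ⟨B, fun n => hB ⟨n, rfl⟩⟩
  have hu_bdd : IsBoundedUnder (· ≤ ·) atTop (fun n => ‖f (yn n) - f y‖) :=
    isBoundedUnder_of ⟨C + B, fun n => (key n).trans (add_le_add (hC n) (hB n))⟩
  have hv_bdd : IsBoundedUnder (· ≤ ·) atTop (fun n => ‖yn n - y‖) :=
    isBoundedUnder_of ⟨C, fun n => hC n⟩
  -- conclude via ε-argument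
  refine le_of_forall_pos_le_add fun ε hε => ?_
  have hev : ∀ᶠ n in atTop, ‖f (yn n) - f y‖ ≤ ‖yn n - y‖ + ε := by
    filter_upwards [he.eventually (eventually_le_nhds hε)] with n hn
    calc ‖f (yn n) - f y‖ ≤ ‖g n‖ + (ω (g n) + ρ (g n)) := key n
      _ ≤ ‖yn n - y‖ + ε := by simp only [hg]; linarith
  have h1 : Filter.liminf (fun n => ‖f (yn n) - f y‖) atTop ≤
      Filter.liminf (fun n => ‖yn n - y‖ + ε) atTop := by
    refine liminf_le_liminf hev (isBoundedUnder_of ⟨0, fun n => norm_nonneg _⟩) ?_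
    exact isCoboundedUnder_ge_of_eventually_le atTop
      (Eventually.of_forall fun n => add_le_add (hC n) (le_refl ε))
  have h2 : Filter.liminf (fun n => ‖yn n - y‖ + ε) atTop =
      Filter.liminf (fun n => ‖yn n - y‖) atTop + ε :=
    liminf_add_const atTop (fun n => ‖yn n - y‖) ε
      hv_bdd.isCoboundedUnder_ge (isBoundedUnder_of ⟨0, fun n => norm_nonneg _⟩)
  rw [h2] at h1
  exact h1
end

section
/- Let M be a nonempty, bounded, closed, convex subset of a reflexive Banach space X with the Opial property, and let f : M → X. Let x_0 ∈ M and suppose the iteration x_{n+1} = f(x_n) stays in M, is asymptotically regular (‖x_{n+1} − x_n‖ → 0), and f is weakly sequentially non-expansive at every weak accumulation point of Σ(x_0) = {x_n}. If the fixed point set F(f) = {x ∈ M : f(x) = x} is contained in Λ(Σ(x_0)) := {z : lim_n ‖x_n − z‖ exists}, then the entire sequence {x_n} converges weakly to some w ∈ F(f), and ψ(w) = min_{z ∈ Λ(Σ(x_0))} ψ(z) = min_{z ∈ F(f)} ψ(z), where ψ(z) := lim_n ‖x_n − z‖. -/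
open Filter Topology

private lemma stmt10_bdd_ge (v : ℕ → ℝ) (h : ∀ n, 0 ≤ v n) :
    Filter.IsBoundedUnder (· ≥ ·) atTop v := Filter.isBoundedUnder_of ⟨0, h⟩

private lemma stmt10_cobdd_ge (v : ℕ → ℝ) (C : ℝ) (h : ∀ n, v n ≤ C) :
    Filter.IsCoboundedUnder (· ≥ ·) atTop v :=
  Filter.IsBoundedUnder.isCoboundedUnder_ge (Filter.isBoundedUnder_of ⟨C, h⟩)

private lemma stmt10_fix {X : Type*} [NormedAddCommGroup X] [NormedSpace ℝ X]
    (opial : ∀ (u : ℕ → X) (p : X),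
      (∀ φ : X →L[ℝ] ℝ, Tendsto (fun n => φ (u n)) atTop (𝓝 (φ p))) →
      ∀ z, z ≠ p →
        Filter.liminf (fun n => ‖u n - p‖) atTop < Filter.liminf (fun n => ‖u n - z‖) atTop)
    (M : Set X) (hMc : IsClosed M) (hMconv : Convex ℝ M)
    (f : X → X) (x : ℕ → X)
    (hiter : ∀ n, x (n + 1) = f (x n)) (hxM : ∀ n, x n ∈ M)
    (hreg : Tendsto (fun n => ‖x (n + 1) - x n‖) atTop (𝓝 0))
    (sharp_acc : ∀ w : X,
      (∃ nk : ℕ → ℕ, StrictMono nk ∧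
        ∀ φ : X →L[ℝ] ℝ, Tendsto (fun k => φ (x (nk k))) atTop (𝓝 (φ w))) →
      ∀ yn : ℕ → X, (∀ n, yn n ∈ M) →
        (∀ φ : X →L[ℝ] ℝ, Tendsto (fun n => φ (yn n)) atTop (𝓝 (φ w))) →
        Filter.liminf (fun n => ‖f (yn n) - f w‖) atTop ≤
          Filter.liminf (fun n => ‖yn n - w‖) atTop)
    (C : ℝ) (hC : ∀ y ∈ M, ‖y‖ ≤ C)
    (σ : ℕ → ℕ) (hσ : StrictMono σ) (p : X)
    (hw : ∀ φ : X →L[ℝ] ℝ, Tendsto (fun k => φ (x (σ k))) atTop (𝓝 (φ p))) :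
    p ∈ M ∧ f p = p := by
  have hpM : p ∈ M := by
    by_contra h
    obtain ⟨φ, u, hu, hup⟩ := geometric_hahn_banach_closed_point hMconv hMc h
    have : φ p ≤ u :=
      le_of_tendsto (hw φ) (Eventually.of_forall fun k => (hu _ (hxM _)).le)
    linarith
  refine ⟨hpM, ?_⟩
  by_contra hne
  set u : ℕ → X := fun k => x (σ k) with hu
  have hub : ∀ z : X, ∀ k, ‖u k - z‖ ≤ C + ‖z‖ := fun z k =>
    (norm_sub_le _ _).trans (add_le_add_left (hC _ (hxM _)) _)
  -- the vanishing term
  set a : ℕ → ℝ := fun k => ‖x (σ k) - x (σ k + 1)‖ with ha_def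
  have ha : Tendsto a atTop (𝓝 0) := by
    have := hreg.comp hσ.tendsto_atTop
    simpa [a, norm_sub_rev, Function.comp_def] using this
  set b : ℕ → ℝ := fun k => ‖f (u k) - f p‖ with hb_def
  have hbpt : ∀ k, b k = ‖x (σ k + 1) - f p‖ := fun k => by simp only [hb_def, hu, hiter (σ k)]
  have hbub : ∀ k, b k ≤ C + ‖f p‖ := fun k => by
    rw [hbpt k]; exact (norm_sub_le _ _).trans (add_le_add_left (hC _ (hxM _)) _)
  have hpt : ∀ k, ‖u k - f p‖ ≤ a k + b k := by
    intro k
    calc ‖u k - f p‖ = ‖(x (σ k) - x (σ k + 1)) + (x (σ k + 1) - f p)‖ := by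
          rw [sub_add_sub_cancel]
      _ ≤ ‖x (σ k) - x (σ k + 1)‖ + ‖x (σ k + 1) - f p‖ := norm_add_le _ _
      _ = a k + b k := by rw [hbpt k]
  have h1 : liminf b atTop ≤ liminf (fun k => ‖u k - p‖) atTop :=
    sharp_acc p ⟨σ, hσ, hw⟩ u (fun k => hxM _) hw
  have haub : ∀ k, a k ≤ 2 * C := fun k =>
    (norm_sub_le _ _).trans (by
      have h1 := hC _ (hxM (σ k)); have h2 := hC _ (hxM (σ k + 1)); linarith)
  have step1 : liminf (fun k => ‖u k - f p‖) atTop ≤ liminf (a + b) atTop :=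
    liminf_le_liminf (Eventually.of_forall hpt)
      (stmt10_bdd_ge _ fun k => norm_nonneg _)
      (stmt10_cobdd_ge _ (2 * C + (C + ‖f p‖)) fun k => add_le_add (haub k) (hbub k))
  have step2 : liminf (a + b) atTop ≤ limsup a atTop + liminf b atTop :=
    liminf_add_le (stmt10_bdd_ge _ fun k => norm_nonneg _)
      (Filter.isBoundedUnder_of ⟨2 * C, haub⟩)
      (stmt10_bdd_ge _ fun k => norm_nonneg _)
      (stmt10_cobdd_ge _ (C + ‖f p‖) hbub)
  rw [ha.limsup_eq, zero_add] at step2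
  have h3 := opial u p hw (f p) hne
  have : liminf (fun k => ‖u k - p‖) atTop < liminf (fun k => ‖u k - p‖) atTop :=
    lt_of_lt_of_le h3 ((step1.trans step2).trans h1)
  exact lt_irrefl _ this

/-- Theorem main1: weak convergence of the fixed point iteration
`x_{n+1} = f(x_n)` to a fixed point `w`, with `ψ(w)` minimal on `Λ(Σ)` and on `F(f)`. -/
theorem stmt_10 {X : Type*} [NormedAddCommGroup X] [NormedSpace ℝ X] [CompleteSpace X]
    (reflexive : ∀ u : ℕ → X, (∃ C : ℝ, ∀ n, ‖u n‖ ≤ C) →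
      ∃ (nk : ℕ → ℕ) (p : X), StrictMono nk ∧
        ∀ φ : X →L[ℝ] ℝ, Tendsto (fun k => φ (u (nk k))) atTop (𝓝 (φ p)))
    (opial : ∀ (u : ℕ → X) (p : X),
      (∀ φ : X →L[ℝ] ℝ, Tendsto (fun n => φ (u n)) atTop (𝓝 (φ p))) →
      ∀ z, z ≠ p →
        Filter.liminf (fun n => ‖u n - p‖) atTop < Filter.liminf (fun n => ‖u n - z‖) atTop)
    (M : Set X) (hMne : M.Nonempty) (hMb : Bornology.IsBounded M)
    (hMc : IsClosed M) (hMconv : Convex ℝ M)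
    (f : X → X) (x : ℕ → X) (x0 : X) (hx0 : x 0 = x0) (hx0M : x0 ∈ M)
    (hiter : ∀ n, x (n + 1) = f (x n)) (hxM : ∀ n, x n ∈ M)
    (hreg : Tendsto (fun n => ‖x (n + 1) - x n‖) atTop (𝓝 0))
    (sharp_acc : ∀ w : X,
      (∃ nk : ℕ → ℕ, StrictMono nk ∧
        ∀ φ : X →L[ℝ] ℝ, Tendsto (fun k => φ (x (nk k))) atTop (𝓝 (φ w))) →
      ∀ yn : ℕ → X, (∀ n, yn n ∈ M) →
        (∀ φ : X →L[ℝ] ℝ, Tendsto (fun n => φ (yn n)) atTop (𝓝 (φ w))) →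
        Filter.liminf (fun n => ‖f (yn n) - f w‖) atTop ≤
          Filter.liminf (fun n => ‖yn n - w‖) atTop)
    (hFΛ : ∀ z ∈ M, f z = z → ∃ l : ℝ, Tendsto (fun n => ‖x n - z‖) atTop (𝓝 l)) :
    ∃ w ∈ M, f w = w ∧
      (∀ φ : X →L[ℝ] ℝ, Tendsto (fun n => φ (x n)) atTop (𝓝 (φ w))) ∧
      ∃ lw : ℝ, Tendsto (fun n => ‖x n - w‖) atTop (𝓝 lw) ∧
        (∀ z lz, Tendsto (fun n => ‖x n - z‖) atTop (𝓝 lz) → lw ≤ lz) ∧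
        (∀ z ∈ M, f z = z → ∀ lz, Tendsto (fun n => ‖x n - z‖) atTop (𝓝 lz) → lw ≤ lz) := by
  obtain ⟨C, hC⟩ := isBounded_iff_forall_norm_le.1 hMb
  have hxb : ∀ n, ‖x n‖ ≤ C := fun n => hC _ (hxM n)
  -- key: every weak subsequential limit is a fixed point in M with ψ-limit
  have key : ∀ (σ : ℕ → ℕ), StrictMono σ → ∀ p : X,
      (∀ φ : X →L[ℝ] ℝ, Tendsto (fun k => φ (x (σ k))) atTop (𝓝 (φ p))) →
      p ∈ M ∧ f p = p ∧ ∃ l : ℝ, Tendsto (fun n => ‖x n - p‖) atTop (𝓝 l) := by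
    intro σ hσ p hp
    obtain ⟨hpM, hpfix⟩ := stmt10_fix opial M hMc hMconv f x hiter hxM hreg sharp_acc C hC σ hσ p hp
    exact ⟨hpM, hpfix, hFΛ p hpM hpfix⟩
  -- get one weak subsequential limit w
  obtain ⟨nk, w, hnk, hwweak⟩ := reflexive x ⟨C, hxb⟩
  obtain ⟨hwM, hwfix, lw, hlw⟩ := key nk hnk w hwweak
  -- uniqueness of weak subsequential limits
  have huniq : ∀ (σ : ℕ → ℕ), StrictMono σ → ∀ p : X,
      (∀ φ : X →L[ℝ] ℝ, Tendsto (fun k => φ (x (σ k))) atTop (𝓝 (φ p))) → p = w := by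
    intro σ hσ p hp
    by_contra hne
    obtain ⟨hpM, hpfix, lp, hlp⟩ := key σ hσ p hp
    have o1 := opial (fun k => x (σ k)) p hp w (fun h => hne h.symm)
    have o2 := opial (fun k => x (nk k)) w hwweak p hne
    have e1 : liminf (fun k => ‖x (σ k) - p‖) atTop = lp :=
      (hlp.comp hσ.tendsto_atTop).liminf_eq
    have e2 : liminf (fun k => ‖x (σ k) - w‖) atTop = lw :=
      (hlw.comp hσ.tendsto_atTop).liminf_eq
    have e3 : liminf (fun k => ‖x (nk k) - w‖) atTop = lw :=
      (hlw.comp hnk.tendsto_atTop).liminf_eq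
    have e4 : liminf (fun k => ‖x (nk k) - p‖) atTop = lp :=
      (hlp.comp hnk.tendsto_atTop).liminf_eq
    rw [e1, e2] at o1
    rw [e3, e4] at o2
    linarith
  -- the whole sequence converges weakly to w
  have hweakfull : ∀ φ : X →L[ℝ] ℝ, Tendsto (fun n => φ (x n)) atTop (𝓝 (φ w)) := by
    intro φ
    by_contra hcon
    rw [Metric.tendsto_atTop] at hcon
    push_neg at hcon
    obtain ⟨ε, hε, hfreq⟩ := hcon
    obtain ⟨σ, hσ, hσprop⟩ := extraction_of_frequently_atTop
      (frequently_atTop.2 fun N => by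
        obtain ⟨n, hn, hd⟩ := hfreq N; exact ⟨n, hn, hd⟩)
    obtain ⟨mk, p, hmk, hp⟩ := reflexive (fun k => x (σ k)) ⟨C, fun k => hxb _⟩
    have hpw : p = w := huniq (σ ∘ mk) (hσ.comp hmk) p (fun ψ => hp ψ)
    subst hpw
    have := (hp φ).eventually (Metric.ball_mem_nhds (φ p) hε)
    obtain ⟨j, hj⟩ := this.exists
    exact absurd (Metric.mem_ball.1 hj) (not_lt.2 (hσprop (mk j)))
  -- minimality
  have hmin : ∀ z lz, Tendsto (fun n => ‖x n - z‖) atTop (𝓝 lz) → lw ≤ lz := by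
    intro z lz hlz
    rcases eq_or_ne z w with rfl | hne
    · exact le_of_eq (tendsto_nhds_unique hlw hlz)
    · have := opial x w hweakfull z hne
      rw [hlw.liminf_eq, hlz.liminf_eq] at this
      exact this.le
  exact ⟨w, hwM, hwfix, hweakfull, lw, hlw, hmin, fun z _ _ lz hlz => hmin z lz hlz⟩
end

section
/- Let X be a Banach space with the Opial property, M ⊂ X, and f : M → M. Let {x_n} be the iteration x_{n+1} = f(x_n), and assume {x_n} is asymptotically regular. Then every weak accumulation point w of {x_n} at which f is weakly sequentially non-expansive is a fixed point of f, i.e. f(w) = w. -/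
open Filter Topology

/-- Auxiliary: two nonnegative real sequences whose termwise distance is
dominated by a sequence tending to `0` have comparable liminfs. -/
lemma liminf_le_liminf_of_close (a b c : ℕ → ℝ) (ha : ∀ k, 0 ≤ a k)
    (hc : Tendsto c atTop (𝓝 0))
    (hab : ∀ k, a k ≤ b k + c k) (hba : ∀ k, b k ≤ a k + c k) :
    Filter.liminf a atTop ≤ Filter.liminf b atTop := by
  set Sa := {d : ℝ | ∀ᶠ k in atTop, d ≤ a k} with hSaDef
  set Sb := {d : ℝ | ∀ᶠ k in atTop, d ≤ b k} with hSbDef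
  have hSa0 : (0:ℝ) ∈ Sa := Eventually.of_forall ha
  have hAB : ∀ ε : ℝ, 0 < ε → ∀ d ∈ Sa, d - ε ∈ Sb := by
    intro ε hε d hd
    have hce : ∀ᶠ k in atTop, c k ≤ ε := hc.eventually (eventually_le_nhds hε)
    filter_upwards [hd, hce] with k h1 h2
    have := hab k; linarith
  have hBA : ∀ ε : ℝ, 0 < ε → ∀ d ∈ Sb, d - ε ∈ Sa := by
    intro ε hε d hd
    have hce : ∀ᶠ k in atTop, c k ≤ ε := hc.eventually (eventually_le_nhds hε)
    filter_upwards [hd, hce] with k h1 h2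
    have := hba k; linarith
  rw [Filter.liminf_eq, Filter.liminf_eq]
  by_cases hBa : BddAbove Sa
  · have hBb : BddAbove Sb := by
      obtain ⟨m, hm⟩ := hBa
      exact ⟨m + 1, fun d hd => by have := hm (hBA 1 one_pos d hd); linarith⟩
    apply le_of_forall_pos_le_add
    intro ε hε
    apply csSup_le ⟨0, hSa0⟩
    intro d hd
    have := le_csSup hBb (hAB ε hε d hd)
    linarith
  · have hBb : ¬ BddAbove Sb := by
      intro ⟨m, hm⟩
      exact hBa ⟨m + 1, fun d hd => by have := hm (hAB 1 one_pos d hd); linarith⟩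
    rw [Real.sSup_of_not_bddAbove hBa, Real.sSup_of_not_bddAbove hBb]

/-- Remark arnew: under the Opial condition and asymptotic
regularity, every weak accumulation point `w` of the iteration `x_{n+1} = f(x_n)`
at which `f` is weakly sequentially non-expansive is a fixed point of `f`. -/
theorem stmt_11 {X : Type*} [NormedAddCommGroup X] [NormedSpace ℝ X] [CompleteSpace X]
    (opial : ∀ (u : ℕ → X) (p : X),
      (∀ φ : X →L[ℝ] ℝ, Tendsto (fun n => φ (u n)) atTop (𝓝 (φ p))) →
      ∀ z, z ≠ p →
        Filter.liminf (fun n => ‖u n - p‖) atTop < Filter.liminf (fun n => ‖u n - z‖) atTop)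
    (M : Set X) (f : X → X) (hfM : ∀ x ∈ M, f x ∈ M)
    (x : ℕ → X) (hiter : ∀ n, x (n + 1) = f (x n)) (hxM : ∀ n, x n ∈ M)
    (hreg : Tendsto (fun n => ‖x (n + 1) - x n‖) atTop (𝓝 0))
    (w : X) (hwM : w ∈ M)
    (nk : ℕ → ℕ) (hnk : StrictMono nk)
    (hweak : ∀ φ : X →L[ℝ] ℝ, Tendsto (fun k => φ (x (nk k))) atTop (𝓝 (φ w)))
    (sharp : ∀ yn : ℕ → X, (∀ n, yn n ∈ M) →
      (∀ φ : X →L[ℝ] ℝ, Tendsto (fun n => φ (yn n)) atTop (𝓝 (φ w))) →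
      Filter.liminf (fun n => ‖f (yn n) - f w‖) atTop ≤
        Filter.liminf (fun n => ‖yn n - w‖) atTop) :
    f w = w := by
  by_contra hne
  -- Opial: liminf ‖x(nk) - w‖ < liminf ‖x(nk) - f w‖
  have h1 := opial (fun k => x (nk k)) w hweak (f w) hne
  -- asymptotic regularity along the subsequence
  have hc : Tendsto (fun k => ‖x (nk k + 1) - x (nk k)‖) atTop (𝓝 0) :=
    hreg.comp hnk.tendsto_atTop
  -- liminf ‖x(nk) - f w‖ ≤ liminf ‖f(x(nk)) - f w‖
  have h2 : Filter.liminf (fun k => ‖x (nk k) - f w‖) atTop ≤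
      Filter.liminf (fun k => ‖f (x (nk k)) - f w‖) atTop := by
    apply liminf_le_liminf_of_close _ _ (fun k => ‖x (nk k + 1) - x (nk k)‖)
      (fun k => norm_nonneg _) hc
    · intro k
      rw [← hiter (nk k)]
      calc ‖x (nk k) - f w‖ ≤ ‖x (nk k) - x (nk k + 1)‖ + ‖x (nk k + 1) - f w‖ :=
            norm_sub_le_norm_sub_add_norm_sub _ _ _
        _ = ‖x (nk k + 1) - f w‖ + ‖x (nk k + 1) - x (nk k)‖ := by
            rw [norm_sub_rev]; ring
    · intro k
      rw [← hiter (nk k)]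
      calc ‖x (nk k + 1) - f w‖ ≤ ‖x (nk k + 1) - x (nk k)‖ + ‖x (nk k) - f w‖ :=
            norm_sub_le_norm_sub_add_norm_sub _ _ _
        _ = ‖x (nk k) - f w‖ + ‖x (nk k + 1) - x (nk k)‖ := by ring
  -- weak sequential non-expansiveness at w
  have h3 := sharp (fun k => x (nk k)) (fun k => hxM _) hweak
  linarith
end

section
/- Let X be a reflexive Banach space with the Opial property and let Σ = {x_n} be a bounded sequence in X. Suppose there exists p ∈ X such that limsup_n ‖x_n − p‖ ≤ liminf_n ‖x_n − w‖ for every weak accumulation point w of Σ. Then p ∈ Λ(Σ) (i.e., lim_n ‖x_n − p‖ exists), p is the unique weak accumulation point of Σ, and x_n ⇀ p weakly as n → ∞. -/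
/-!
Every weak accumulation point `w` equals `p`: along a subsequence `x_{n_k} ⇀ w`, and if `w ≠ p`
the Opial property gives `liminf ‖x_{n_k} - w‖ < liminf ‖x_{n_k} - p‖ ≤ limsup ‖x_n - p‖`,
contradicting the hypothesis `limsup ‖x_n - p‖ ≤ liminf ‖x_n - w‖ ≤ liminf ‖x_{n_k} - w‖`.
Reflexivity provides at least one weak accumulation point, so `p` is one; applying the hypothesis
to `w = p` squeezes `liminf` and `limsup` of `‖x_n - p‖` together. Finally, every subsequence of
`x` has a further subsequence converging weakly, necessarily to `p`, so `x_n ⇀ p`.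
-/

open Filter Topology

lemma isBoundedUnder_le_norm_sub {α E : Type*} [SeminormedAddCommGroup E] {x : α → E} {C : ℝ}
    (hC : ∀ n, ‖x n‖ ≤ C) (z : E) (l : Filter α) :
    IsBoundedUnder (· ≤ ·) l (fun n => ‖x n - z‖) :=
  isBoundedUnder_of ⟨C + ‖z‖, fun n => (norm_sub_le _ _).trans (by gcongr; exact hC n)⟩

lemma isBoundedUnder_ge_norm {α E : Type*} [SeminormedAddGroup E] (f : α → E) (l : Filter α) :
    IsBoundedUnder (· ≥ ·) l (fun n => ‖f n‖) :=
  isBoundedUnder_of ⟨0, fun _ => norm_nonneg _⟩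

section WeakConvergence

variable {X : Type*} [NormedAddCommGroup X] [NormedSpace ℝ X] {x : ℕ → X}

def WeakTendsto (u : ℕ → X) (p : X) : Prop :=
  ∀ φ : X →L[ℝ] ℝ, Tendsto (fun n => φ (u n)) atTop (𝓝 (φ p))

def IsWeakAccPt (u : ℕ → X) (w : X) : Prop :=
  ∃ nk : ℕ → ℕ, StrictMono nk ∧ WeakTendsto (u ∘ nk) w

def OpialProperty (X : Type*) [NormedAddCommGroup X] [NormedSpace ℝ X] : Prop :=
  ∀ (u : ℕ → X) (p : X), WeakTendsto u p → ∀ z, z ≠ p →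
    liminf (fun n => ‖u n - p‖) atTop < liminf (fun n => ‖u n - z‖) atTop

lemma IsWeakAccPt.of_comp {u : ℕ → X} {w : X} {n : ℕ → ℕ} (hn : StrictMono n)
    (hw : IsWeakAccPt (u ∘ n) w) : IsWeakAccPt u w :=
  let ⟨nk, hnk, hlim⟩ := hw
  ⟨n ∘ nk, hn.comp hnk, hlim⟩

lemma eq_of_isWeakAccPt_of_opialProperty (hx : ∃ C, ∀ n, ‖x n‖ ≤ C) (hX : OpialProperty X)
    {p w : X}
    (hpw : limsup (fun n => ‖x n - p‖) atTop ≤ liminf (fun n => ‖x n - w‖) atTop)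
    (hw : IsWeakAccPt x w) : w = p := by
  obtain ⟨nk, hnk, hlim⟩ := hw
  obtain ⟨C, hC⟩ := hx
  by_contra hne
  have hsub : Tendsto nk atTop atTop := hnk.tendsto_atTop
  refine (hX (x ∘ nk) w hlim p (Ne.symm hne)).not_ge ?_
  calc liminf (fun k => ‖x (nk k) - p‖) atTop
      ≤ limsup (fun k => ‖x (nk k) - p‖) atTop :=
        liminf_le_limsup (isBoundedUnder_le_norm_sub (fun k => hC (nk k)) p _)
          (isBoundedUnder_ge_norm _ _)
    _ ≤ limsup (fun n => ‖x n - p‖) atTop :=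
        hsub.limsup_comp_le_limsup (u := fun n => ‖x n - p‖)
          (isBoundedUnder_ge_norm _ _).isCoboundedUnder_le (isBoundedUnder_le_norm_sub hC p _)
    _ ≤ liminf (fun n => ‖x n - w‖) atTop := hpw
    _ ≤ liminf (fun k => ‖x (nk k) - w‖) atTop :=
        hsub.liminf_le_liminf_comp (u := fun n => ‖x n - w‖)
          (isBoundedUnder_le_norm_sub hC w _).isCoboundedUnder_ge (isBoundedUnder_ge_norm _ _)

lemma weakTendsto_of_forall_isWeakAccPt_eq (hx : ∃ C, ∀ n, ‖x n‖ ≤ C)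
    (hcompact : ∀ u : ℕ → X, (∃ C, ∀ n, ‖u n‖ ≤ C) → ∃ w, IsWeakAccPt u w) {p : X}
    (huniq : ∀ w, IsWeakAccPt x w → w = p) : WeakTendsto x p := by
  intro φ
  refine tendsto_of_subseq_tendsto fun ns hns => ?_
  obtain ⟨ms, -, hmono⟩ := strictMono_subseq_of_tendsto_atTop hns
  obtain ⟨C, hC⟩ := hx
  obtain ⟨w, ks, hks, hlim⟩ := hcompact (x ∘ ns ∘ ms) ⟨C, fun n => hC _⟩
  obtain rfl : w = p := huniq w (IsWeakAccPt.of_comp hmono ⟨ks, hks, hlim⟩)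
  exact ⟨ms ∘ ks, hlim φ⟩

end WeakConvergence

theorem stmt_12_general {X : Type*} [NormedAddCommGroup X] [NormedSpace ℝ X]
    (reflexive : ∀ u : ℕ → X, (∃ C : ℝ, ∀ n, ‖u n‖ ≤ C) →
      ∃ (nk : ℕ → ℕ) (p : X), StrictMono nk ∧
        ∀ φ : X →L[ℝ] ℝ, Tendsto (fun k => φ (u (nk k))) atTop (𝓝 (φ p)))
    (opial : ∀ (u : ℕ → X) (p : X),
      (∀ φ : X →L[ℝ] ℝ, Tendsto (fun n => φ (u n)) atTop (𝓝 (φ p))) →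
      ∀ z, z ≠ p →
        Filter.liminf (fun n => ‖u n - p‖) atTop < Filter.liminf (fun n => ‖u n - z‖) atTop)
    (x : ℕ → X) (hbdd : ∃ C : ℝ, ∀ n, ‖x n‖ ≤ C)
    (p : X)
    (hp : ∀ w : X, (∃ nk : ℕ → ℕ, StrictMono nk ∧
        ∀ φ : X →L[ℝ] ℝ, Tendsto (fun k => φ (x (nk k))) atTop (𝓝 (φ w))) →
      Filter.limsup (fun n => ‖x n - p‖) atTop ≤ Filter.liminf (fun n => ‖x n - w‖) atTop) :
    (∃ l : ℝ, Tendsto (fun n => ‖x n - p‖) atTop (𝓝 l)) ∧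
    (∀ w : X, (∃ nk : ℕ → ℕ, StrictMono nk ∧
        ∀ φ : X →L[ℝ] ℝ, Tendsto (fun k => φ (x (nk k))) atTop (𝓝 (φ w))) ↔ w = p) ∧
    (∀ φ : X →L[ℝ] ℝ, Tendsto (fun n => φ (x n)) atTop (𝓝 (φ p))) := by
  have hacc : ∀ u : ℕ → X, (∃ C, ∀ n, ‖u n‖ ≤ C) → ∃ w, IsWeakAccPt u w := fun u hu =>
    let ⟨nk, w, hnk, hlim⟩ := reflexive u hu
    ⟨w, nk, hnk, hlim⟩
  have huniq : ∀ w, IsWeakAccPt x w → w = p := fun w hw =>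
    eq_of_isWeakAccPt_of_opialProperty hbdd opial (hp w hw) hw
  have hpacc : IsWeakAccPt x p := by
    obtain ⟨w, hw⟩ := hacc x hbdd
    exact huniq w hw ▸ hw
  have hlim : Tendsto (fun n => ‖x n - p‖) atTop (𝓝 (limsup (fun n => ‖x n - p‖) atTop)) :=
    let ⟨_, hC⟩ := hbdd
    tendsto_of_le_liminf_of_limsup_le (hp p hpacc) le_rfl
      (isBoundedUnder_le_norm_sub hC p _) (isBoundedUnder_ge_norm _ _)
  exact ⟨⟨_, hlim⟩, fun w => ⟨huniq w, fun h => h ▸ hpacc⟩,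
    weakTendsto_of_forall_isWeakAccPt_eq hbdd hacc huniq⟩

/-- Remark after Prop. conv: if a bounded sequence in a reflexive
Opial space admits `p` with `limsup ‖x_n - p‖ ≤ liminf ‖x_n - w‖` for all weak
accumulation points `w`, then `p ∈ Λ(Σ)`, `p` is the unique weak accumulation
point, and `x_n ⇀ p`. -/
theorem stmt_12 {X : Type*} [NormedAddCommGroup X] [NormedSpace ℝ X] [CompleteSpace X]
    (reflexive : ∀ u : ℕ → X, (∃ C : ℝ, ∀ n, ‖u n‖ ≤ C) →
      ∃ (nk : ℕ → ℕ) (p : X), StrictMono nk ∧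
        ∀ φ : X →L[ℝ] ℝ, Tendsto (fun k => φ (u (nk k))) atTop (𝓝 (φ p)))
    (opial : ∀ (u : ℕ → X) (p : X),
      (∀ φ : X →L[ℝ] ℝ, Tendsto (fun n => φ (u n)) atTop (𝓝 (φ p))) →
      ∀ z, z ≠ p →
        Filter.liminf (fun n => ‖u n - p‖) atTop < Filter.liminf (fun n => ‖u n - z‖) atTop)
    (x : ℕ → X) (hbdd : ∃ C : ℝ, ∀ n, ‖x n‖ ≤ C)
    (p : X)
    (hp : ∀ w : X, (∃ nk : ℕ → ℕ, StrictMono nk ∧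
        ∀ φ : X →L[ℝ] ℝ, Tendsto (fun k => φ (x (nk k))) atTop (𝓝 (φ w))) →
      Filter.limsup (fun n => ‖x n - p‖) atTop ≤ Filter.liminf (fun n => ‖x n - w‖) atTop) :
    (∃ l : ℝ, Tendsto (fun n => ‖x n - p‖) atTop (𝓝 l)) ∧
    (∀ w : X, (∃ nk : ℕ → ℕ, StrictMono nk ∧
        ∀ φ : X →L[ℝ] ℝ, Tendsto (fun k => φ (x (nk k))) atTop (𝓝 (φ w))) ↔ w = p) ∧
    (∀ φ : X →L[ℝ] ℝ, Tendsto (fun n => φ (x n)) atTop (𝓝 (φ p))) :=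
  stmt_12_general reflexive opial x hbdd p hp
end

section
/- Let M be a bounded convex subset of a normed space X with diameter d_M := sup_{v,w∈M} ‖v−w‖ < ∞, let f : M → X, let τ ∈ (0,1), and set g_τ(x) := τ x + (1−τ) f(x). Let x_0 ∈ M and suppose the iteration x_{n+1} = g_τ(x_n) stays in M. If limsup_{n→∞} ‖f(x_{n+1}) − f(x_n)‖ ≤ limsup_{n→∞} ‖x_{n+1} − x_n‖, then the sequence {x_n} is asymptotically regular: ‖x_{n+1} − x_n‖ → 0 as n → ∞. -/
open Filter Topology

/-- Lemma Ish: for the averaged iteration `x_{n+1} = g_τ(x_n)` in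
a bounded convex set, `limsup ‖f(x_{n+1}) - f(x_n)‖ ≤ limsup ‖x_{n+1} - x_n‖`
implies asymptotic regularity. -/
theorem stmt_14 {X : Type*} [NormedAddCommGroup X] [NormedSpace ℝ X]
    (M : Set X) (hMb : Bornology.IsBounded M) (hMconv : Convex ℝ M)
    (f : X → X) (τ : ℝ) (hτ0 : 0 < τ) (hτ1 : τ < 1)
    (x : ℕ → X) (hx0 : x 0 ∈ M) (hxM : ∀ n, x n ∈ M)
    (hiter : ∀ n, x (n + 1) = τ • x n + (1 - τ) • f (x n))
    (hls : Filter.limsup (fun n => ‖f (x (n + 1)) - f (x n)‖) atTop ≤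
      Filter.limsup (fun n => ‖x (n + 1) - x n‖) atTop) :
    Tendsto (fun n => ‖x (n + 1) - x n‖) atTop (𝓝 0) := by
  have hσ : (0:ℝ) < 1 - τ := by linarith
  obtain ⟨d, hd⟩ := Metric.isBounded_iff.mp hMb
  set a : ℕ → ℝ := fun n => ‖x (n + 1) - x n‖ with ha_def
  set b : ℕ → ℝ := fun n => ‖f (x (n + 1)) - f (x n)‖ with hb_def
  have ha0 : ∀ n, 0 ≤ a n := fun n => norm_nonneg _
  have had : ∀ n, a n ≤ d := by
    intro n
    have := hd (hxM (n+1)) (hxM n)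
    rwa [dist_eq_norm] at this
  have hd0 : (0:ℝ) ≤ d := le_trans (ha0 0) (had 0)
  set g : ℕ → X := fun n => f (x n) - x n with hg_def
  have hag : ∀ n, x (n + 1) - x n = (1 - τ) • g n := by
    intro n
    simp only [hg_def, hiter n]
    module
  have hagn : ∀ n, a n = (1 - τ) * ‖g n‖ := by
    intro n
    show ‖x (n + 1) - x n‖ = _
    rw [hag n, norm_smul, Real.norm_eq_abs, abs_of_pos hσ]
  have grec : ∀ n, g (n + 1) = τ • g n + (f (x (n + 1)) - f (x n)) := by
    intro n
    simp only [hg_def, hiter n]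
    module
  -- b is bounded
  have hbd : ∀ n, b n ≤ (1 + τ) * d / (1 - τ) := by
    intro n
    have h1 : (1 - τ) • (f (x (n + 1)) - f (x n))
        = (x (n + 1 + 1) - x (n + 1)) - τ • (x (n + 1) - x n) := by
      simp only [hiter n, hiter (n+1)]
      module
    have h2 : (1 - τ) * b n ≤ a (n + 1) + τ * a n := by
      have : ‖(1 - τ) • (f (x (n + 1)) - f (x n))‖
          ≤ ‖x (n + 1 + 1) - x (n + 1)‖ + ‖τ • (x (n + 1) - x n)‖ := by
        rw [h1]; exact norm_sub_le _ _
      rw [norm_smul, norm_smul, Real.norm_eq_abs, Real.norm_eq_abs,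
        abs_of_pos hσ, abs_of_pos hτ0] at this
      exact this
    have h3 : (1 - τ) * b n ≤ (1 + τ) * d := by
      have := had (n + 1); have := had n
      nlinarith [ha0 n, ha0 (n+1)]
    rw [le_div_iff₀ hσ]
    linarith
  have hba : IsBoundedUnder (· ≤ ·) atTop a := isBoundedUnder_of ⟨d, had⟩
  have hba' : IsBoundedUnder (· ≥ ·) atTop a := isBoundedUnder_of ⟨0, ha0⟩
  have hbb : IsBoundedUnder (· ≤ ·) atTop b := isBoundedUnder_of ⟨_, hbd⟩
  have hcoba : IsCoboundedUnder (· ≤ ·) atTop a := hba'.isCoboundedUnder_le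
  have hcoba' : IsCoboundedUnder (· ≥ ·) atTop a := hba.isCoboundedUnder_ge
  set L := limsup a atTop with hL_def
  have hL0 : 0 ≤ L := le_limsup_of_frequently_le (Frequently.of_forall ha0) hba
  have hLle : L ≤ 0 := by
    by_contra hc
    push_neg at hc
    obtain ⟨k, hk⟩ := exists_nat_ge ((d + 1) / L)
    have hkL : d + 1 ≤ k * L := by
      rw [div_le_iff₀ hc] at hk
      linarith
    obtain ⟨C, hC0, hCs⟩ : ∃ C : ℕ → ℝ, C 0 = 1/(1-τ) ∧ ∀ i, C (i+1) = (C i + 1)/τ :=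
      ⟨fun i => Nat.rec ((1:ℝ)/(1-τ)) (fun _ c => (c+1)/τ) i, rfl, fun i => rfl⟩
    have hCpos : ∀ i, 0 ≤ C i := by
      intro i
      induction i with
      | zero => rw [hC0]; positivity
      | succ i ih => rw [hCs]; positivity
    set T := ∑ i ∈ Finset.range k, C (i+1) with hT_def
    have hT0 : 0 ≤ T := Finset.sum_nonneg fun i _ => hCpos (i+1)
    set ε := min (L/2) (1/((1-τ)*T+1)) with hε_def
    have hεpos : 0 < ε := lt_min (by linarith) (by positivity)
    have hεL : ε ≤ L/2 := min_le_left _ _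
    have hεT : (1-τ)*ε*T < 1 := by
      have h1 : ε ≤ 1/((1-τ)*T+1) := min_le_right _ _
      have h2 : (0:ℝ) < (1-τ)*T+1 := by positivity
      rw [le_div_iff₀ h2] at h1
      nlinarith
    have hbev : ∀ᶠ n in atTop, b n < L + ε := by
      apply eventually_lt_of_limsup_lt _ hbb
      calc limsup b atTop ≤ L := hls
        _ < L + ε := by linarith
    obtain ⟨N, hN⟩ := eventually_atTop.mp hbev
    have hfreq : ∃ᶠ n in atTop, L - ε < a n :=
      frequently_lt_of_lt_limsup hcoba (by linarith)
    obtain ⟨m, hma, hmN⟩ := (hfreq.and_eventually (eventually_ge_atTop (N + k))).exists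
    have hkm : k ≤ m := by omega
    have hgm_pos : 0 < ‖g m‖ := by
      have h1 := hagn m
      nlinarith [norm_nonneg (g m)]
    have hgm_ne : g m ≠ 0 := norm_pos_iff.mp hgm_pos
    obtain ⟨φ, hφn, hφm⟩ := exists_dual_vector ℝ (g m) hgm_pos.ne'
    have hφm' : φ (g m) = ‖g m‖ := by exact_mod_cast hφm
    have hφle : ∀ v : X, φ v ≤ ‖v‖ := by
      intro v
      calc φ v ≤ |φ v| := le_abs_self _
        _ = ‖φ v‖ := (Real.norm_eq_abs _).symm
        _ ≤ ‖φ‖ * ‖v‖ := φ.le_opNorm v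
        _ = ‖v‖ := by rw [hφn, one_mul]
    have key : ∀ i, i ≤ k → L/(1-τ) - ε * C i ≤ φ (g (m - i)) := by
      intro i
      induction i with
      | zero =>
        intro _
        have h1 : L - ε < (1-τ) * ‖g m‖ := by rw [← hagn]; exact hma
        have h2 : (L - ε)/(1-τ) ≤ ‖g m‖ := by
          rw [div_le_iff₀ hσ]; nlinarith
        simp only [Nat.sub_zero, hφm', hC0]
        calc L/(1-τ) - ε*(1/(1-τ)) = (L-ε)/(1-τ) := by ring
          _ ≤ ‖g m‖ := h2
      | succ i ih =>
        intro hik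
        have hIH := ih (Nat.le_of_succ_le hik)
        have hj1 : m - (i+1) + 1 = m - i := by omega
        have hjN : N ≤ m - (i+1) := by omega
        have hgrec : g (m - i) = τ • g (m - (i+1))
            + (f (x (m - (i+1) + 1)) - f (x (m - (i+1)))) := by
          rw [← hj1]; exact grec (m - (i+1))
        have hbj : b (m - (i+1)) < L + ε := hN _ hjN
        have hphi : φ (g (m - i)) = τ * φ (g (m - (i+1)))
            + φ (f (x (m - (i+1) + 1)) - f (x (m - (i+1)))) := by
          rw [hgrec, map_add, map_smul, smul_eq_mul]
        have hδ : φ (f (x (m - (i+1) + 1)) - f (x (m - (i+1)))) ≤ b (m - (i+1)) :=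
          hφle _
        have h2 : L/(1-τ) - ε * C i - (L + ε) ≤ τ * φ (g (m - (i+1))) := by
          linarith
        rw [hCs]
        have hexp : τ * (L/(1-τ) - ε*((C i + 1)/τ)) = τ*(L/(1-τ)) - ε*(C i + 1) := by
          field_simp
        have hLid : τ * (L/(1-τ)) = L/(1-τ) - L := by
          field_simp
          ring
        have h4 : τ * (L/(1-τ) - ε*((C i + 1)/τ)) ≤ τ * φ (g (m - (i+1))) := by
          rw [hexp, hLid]
          linarith
        exact le_of_mul_le_mul_left h4 hτ0
    have key2 : ∀ j, j ≤ k →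
        (j:ℝ)*L - (1-τ)*ε*(∑ i ∈ Finset.range j, C (i+1)) ≤ φ (x m - x (m - j)) := by
      intro j
      induction j with
      | zero => intro _; simp
      | succ j ih =>
        intro hjk
        have hIH := ih (Nat.le_of_succ_le hjk)
        have hidx : m - (j+1) + 1 = m - j := by omega
        have hsplit : x m - x (m - (j+1)) = (x m - x (m - j)) + (x (m - j) - x (m - (j+1))) := by
          abel
        have hstep : x (m - j) - x (m - (j+1)) = (1-τ) • g (m - (j+1)) := by
          rw [← hidx]; exact hag (m - (j+1))
        have hkey := key (j+1) hjk
        have hφstep : (1-τ) * (L/(1-τ) - ε * C (j+1)) ≤ φ (x (m - j) - x (m - (j+1))) := by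
          rw [hstep, map_smul, smul_eq_mul]
          exact mul_le_mul_of_nonneg_left hkey (le_of_lt hσ)
        have hexp2 : (1-τ)*(L/(1-τ) - ε*C (j+1)) = L - (1-τ)*ε*C (j+1) := by
          field_simp
        rw [hexp2] at hφstep
        rw [hsplit, map_add, Finset.sum_range_succ]
        push_cast
        linarith
    have hfin := key2 k le_rfl
    have hle_d : φ (x m - x (m - k)) ≤ d := by
      calc φ (x m - x (m - k)) ≤ ‖x m - x (m - k)‖ := hφle _
        _ = dist (x m) (x (m - k)) := (dist_eq_norm _ _).symm
        _ ≤ d := hd (hxM m) (hxM (m - k))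
    rw [← hT_def] at hfin
    linarith
  have hLeq : L = 0 := le_antisymm hLle hL0
  have hliminf : liminf a atTop = 0 := by
    refine le_antisymm ?_ ?_
    · rw [← hLeq]; exact liminf_le_limsup hba hba'
    · exact le_liminf_of_le hcoba' (Eventually.of_forall ha0)
  exact tendsto_of_liminf_eq_limsup hliminf hLeq hba hba'
end

section
/- In the setting of the averaged iteration x_{n+1} = g_τ(x_n) with g_τ(x) = τ x + (1−τ) f(x), setting y_n := f(x_n) − x_n, the identity y_{n+1} − τ y_n = f(x_{n+1}) − f(x_n) holds for all n ≥ 0; moreover, for all n ≥ 1 and ℓ ≥ 2, x_{n+ℓ+1} − x_{n+1} = τ(τ^{−ℓ} − 1) y_{n+ℓ} − Σ_{k=1}^{ℓ−1} (τ^{−k} − 1)(y_{n+k+1} − τ y_{n+k}). -/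
/-!
Each step moves the iterate by `(1 - τ) y_n`, so `x_{n+ℓ+1} - x_{n+1}` telescopes to
`(1 - τ) ∑_{j=1}^{ℓ} y_{n+j}`; the right-hand side of the second identity is this sum rewritten
by summation by parts. The first identity is a direct substitution of the iteration.
-/

open Finset

section SummationByParts

variable {𝕜 X : Type*} [Field 𝕜] [AddCommGroup X] [Module 𝕜 X]

/-- Summation by parts with the weights `τ⁻ᵏ - 1`, chosen so that `(τ^{-(k-1)} - 1) - τ (τ⁻ᵏ - 1)`
is the constant `τ - 1`. -/
theorem sum_range_one_sub_smul_succ_eq {τ : 𝕜} (hτ : τ ≠ 0) (z : ℕ → X) :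
    ∀ ℓ : ℕ, ∑ j ∈ range ℓ, (1 - τ) • z (j + 1) =
      (τ * (τ ^ (-(ℓ : ℤ)) - 1)) • z ℓ -
        ∑ k ∈ Icc 1 (ℓ - 1), (τ ^ (-(k : ℤ)) - 1) • (z (k + 1) - τ • z k)
  | 0 => by simp
  | 1 => by
    simp only [range_one, sum_singleton, Nat.sub_self, Icc_eq_empty_of_lt zero_lt_one, sum_empty,
      sub_zero, Nat.cast_one, zpow_neg_one]
    rw [mul_sub, mul_inv_cancel₀ hτ, mul_one]
  | ℓ + 2 => by
    rw [sum_range_succ, sum_range_one_sub_smul_succ_eq hτ z (ℓ + 1), Nat.add_sub_cancel,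
      show ℓ + 2 - 1 = ℓ + 1 from rfl, sum_Icc_succ_top (Nat.le_add_left 1 ℓ)]
    simp only [zpow_neg, zpow_natCast]
    match_scalars <;> field_simp
    ring

end SummationByParts

section AveragedIteration

variable {𝕜 X : Type*} [Field 𝕜] [AddCommGroup X] [Module 𝕜 X] {f : X → X} {τ : 𝕜}
  {x y : ℕ → X}

theorem averaged_iterate_succ (hiter : ∀ n, x (n + 1) = τ • x n + (1 - τ) • f (x n))
    (hy : ∀ n, y n = f (x n) - x n) (n : ℕ) : x (n + 1) = x n + (1 - τ) • y n := by
  rw [hiter, hy]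
  module

theorem averaged_residual_succ_sub_smul (hiter : ∀ n, x (n + 1) = τ • x n + (1 - τ) • f (x n))
    (hy : ∀ n, y n = f (x n) - x n) (n : ℕ) :
    y (n + 1) - τ • y n = f (x (n + 1)) - f (x n) := by
  rw [hy, hy, hiter n]
  module

theorem averaged_iterate_sub_eq_sum (hiter : ∀ n, x (n + 1) = τ • x n + (1 - τ) • f (x n))
    (hy : ∀ n, y n = f (x n) - x n) (n ℓ : ℕ) :
    x (n + ℓ + 1) - x (n + 1) = ∑ j ∈ range ℓ, (1 - τ) • y (n + (j + 1)) := by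
  rw [← sum_range_sub (fun i => x (n + i + 1))]
  refine sum_congr rfl fun j _ => ?_
  exact sub_eq_iff_eq_add'.2 (averaged_iterate_succ hiter hy (n + j + 1))

end AveragedIteration

theorem stmt_15_general {X : Type*} [NormedAddCommGroup X] [NormedSpace ℝ X]
    (f : X → X) (τ : ℝ) (hτ0 : 0 < τ)
    (x : ℕ → X)
    (hiter : ∀ n, x (n + 1) = τ • x n + (1 - τ) • f (x n))
    (y : ℕ → X) (hy : ∀ n, y n = f (x n) - x n) :
    (∀ n, y (n + 1) - τ • y n = f (x (n + 1)) - f (x n)) ∧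
    (∀ n ≥ 1, ∀ ℓ ≥ 2,
      x (n + ℓ + 1) - x (n + 1) =
        (τ * (τ ^ (-(ℓ : ℤ)) - 1)) • y (n + ℓ) -
          ∑ k ∈ Finset.Icc 1 (ℓ - 1),
            (τ ^ (-(k : ℤ)) - 1) • (y (n + k + 1) - τ • y (n + k))) := by
  refine ⟨averaged_residual_succ_sub_smul hiter hy, fun n _ ℓ _ => ?_⟩
  rw [averaged_iterate_sub_eq_sum hiter hy]
  exact sum_range_one_sub_smul_succ_eq hτ0.ne' (fun k => y (n + k)) ℓ

/-- algebraic identities for the averaged iteration. With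
`y_n = f(x_n) - x_n`: `y_{n+1} - τ y_n = f(x_{n+1}) - f(x_n)` for all `n`, and
for `n ≥ 1`, `ℓ ≥ 2`,
`x_{n+ℓ+1} - x_{n+1} = τ(τ^{-ℓ} - 1) y_{n+ℓ} - ∑_{k=1}^{ℓ-1} (τ^{-k} - 1)(y_{n+k+1} - τ y_{n+k})`. -/
theorem stmt_15 {X : Type*} [NormedAddCommGroup X] [NormedSpace ℝ X]
    (M : Set X) (hMconv : Convex ℝ M)
    (f : X → X) (τ : ℝ) (hτ0 : 0 < τ) (hτ1 : τ < 1)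
    (x : ℕ → X) (hxM : ∀ n, x n ∈ M)
    (hiter : ∀ n, x (n + 1) = τ • x n + (1 - τ) • f (x n))
    (y : ℕ → X) (hy : ∀ n, y n = f (x n) - x n) :
    (∀ n, y (n + 1) - τ • y n = f (x (n + 1)) - f (x n)) ∧
    (∀ n ≥ 1, ∀ ℓ ≥ 2,
      x (n + ℓ + 1) - x (n + 1) =
        (τ * (τ ^ (-(ℓ : ℤ)) - 1)) • y (n + ℓ) -
          ∑ k ∈ Finset.Icc 1 (ℓ - 1),
            (τ ^ (-(k : ℤ)) - 1) • (y (n + k + 1) - τ • y (n + k))) :=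
  stmt_15_general f τ hτ0 x hiter y hy
end

section
/- Let X be a Banach space with the Opial property, M ⊂ X nonempty bounded closed convex, ε_n ∈ (0,1) a sequence, z ∈ M, and f : M → M weakly sequentially non-expansive on M. For each n define φ_n(x) := (1−ε_n) f(x) + ε_n z. If ξ_n is a fixed point of φ_n for each n (ξ_n ∈ M) and ε_n → 0, then ‖f(ξ_n) − ξ_n‖ ≤ ε_n d_M → 0 as n → ∞, where d_M is the diameter of M; i.e., {ξ_n} is an approximate fixed point sequence for f. Moreover, if additionally some subsequence ξ_{n_m} ⇀ ξ* ∈ M weakly, then f(ξ*) = ξ*. -/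
/-!
Since `ξ_n = (1 - ε_n) f(ξ_n) + ε_n z`, the residual `f(ξ_n) - ξ_n` equals `ε_n (f(ξ_n) - z)`, whose
norm is at most `ε_n d_M`. For the second part let `u` be the subsequence, converging weakly to `ξ*`.
As `‖f(u_m) - u_m‖ → 0`, the sequences `u_m` and `f(u_m)` have the same liminf distance to `f(ξ*)`, so
weak non-expansiveness gives `liminf ‖u_m - f(ξ*)‖ ≤ liminf ‖f(u_m) - f(ξ*)‖ ≤ liminf ‖u_m - ξ*‖`,
which the Opial property forbids unless `f(ξ*) = ξ*`.
-/

open Filter Topology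

section Residual

variable {E : Type*} [SeminormedAddCommGroup E] [NormedSpace ℝ E]

theorem norm_sub_eq_mul_of_convexComb_eq {t : ℝ} (ht : 0 ≤ t) {x y z : E}
    (h : (1 - t) • y + t • z = x) : ‖y - x‖ = t * ‖y - z‖ := by
  have hres : y - x = t • (y - z) := by
    rw [← h]
    module
  rw [hres, norm_smul, Real.norm_of_nonneg ht]

end Residual

section Liminf

variable {ι E : Type*} [SeminormedAddCommGroup E] {l : Filter ι} [l.NeBot]

theorem liminf_norm_sub_le_of_tendsto_norm_sub {u v : ι → E} {q : E}
    (hvu : Tendsto (fun n => ‖v n - u n‖) l (𝓝 0))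
    (hv : IsBoundedUnder (· ≤ ·) l fun n => ‖v n - q‖) :
    liminf (fun n => ‖u n - q‖) l ≤ liminf (fun n => ‖v n - q‖) l := by
  have hvu_bdd : IsBoundedUnder (· ≤ ·) l fun n => ‖v n - u n‖ := hvu.isBoundedUnder_le
  have hv_below : IsBoundedUnder (· ≥ ·) l fun n => ‖v n - q‖ :=
    isBoundedUnder_of ⟨0, fun _ => norm_nonneg _⟩
  calc liminf (fun n => ‖u n - q‖) l
      ≤ liminf ((fun n => ‖v n - u n‖) + fun n => ‖v n - q‖) l := by
        refine liminf_le_liminf (Eventually.of_forall fun n => ?_)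
          (isBoundedUnder_of ⟨0, fun _ => norm_nonneg _⟩)
          (isBoundedUnder_le_add hvu_bdd hv).isCoboundedUnder_ge
        simpa only [Pi.add_apply, norm_sub_rev (v n) (u n)] using norm_sub_le_norm_sub_add_norm_sub
          (u n) (v n) q
    _ ≤ limsup (fun n => ‖v n - u n‖) l + liminf (fun n => ‖v n - q‖) l :=
        liminf_add_le (isBoundedUnder_of ⟨0, fun _ => norm_nonneg _⟩) hvu_bdd hv_below
          hv.isCoboundedUnder_ge
    _ = liminf (fun n => ‖v n - q‖) l := by rw [hvu.limsup_eq, zero_add]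

/-- Demiclosedness at `p`: `q` plays the role of `f p` and `v n` that of `f (u n)`. -/
theorem eq_of_opial_of_liminf_le {u v : ι → E} {p q : E}
    (hopial : q ≠ p → liminf (fun n => ‖u n - p‖) l < liminf (fun n => ‖u n - q‖) l)
    (hvu : Tendsto (fun n => ‖v n - u n‖) l (𝓝 0))
    (hv : IsBoundedUnder (· ≤ ·) l fun n => ‖v n - q‖)
    (hle : liminf (fun n => ‖v n - q‖) l ≤ liminf (fun n => ‖u n - p‖) l) : q = p := by
  by_contra hqp
  exact (hopial hqp).not_ge ((liminf_norm_sub_le_of_tendsto_norm_sub hvu hv).trans hle)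

end Liminf

theorem stmt_19_general {X : Type*} [NormedAddCommGroup X] [NormedSpace ℝ X]
    (opial : ∀ (u : ℕ → X) (p : X),
      (∀ φ : X →L[ℝ] ℝ, Tendsto (fun n => φ (u n)) atTop (𝓝 (φ p))) →
      ∀ z, z ≠ p →
        Filter.liminf (fun n => ‖u n - p‖) atTop < Filter.liminf (fun n => ‖u n - z‖) atTop)
    (M : Set X)
    (dM : ℝ) (hdM : IsLUB {d : ℝ | ∃ v ∈ M, ∃ w ∈ M, d = ‖v - w‖} dM)
    (f : X → X) (hfM : ∀ x ∈ M, f x ∈ M)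
    (sharp : ∀ y ∈ M, ∀ yn : ℕ → X, (∀ n, yn n ∈ M) →
      (∀ φ : X →L[ℝ] ℝ, Tendsto (fun n => φ (yn n)) atTop (𝓝 (φ y))) →
      Filter.liminf (fun n => ‖f (yn n) - f y‖) atTop ≤
        Filter.liminf (fun n => ‖yn n - y‖) atTop)
    (ε : ℕ → ℝ) (hε0 : ∀ n, 0 < ε n)
    (hεlim : Tendsto ε atTop (𝓝 0))
    (z : X) (hz : z ∈ M)
    (ξ : ℕ → X) (hξM : ∀ n, ξ n ∈ M)
    (hfix : ∀ n, (1 - ε n) • f (ξ n) + ε n • z = ξ n) :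
    (∀ n, ‖f (ξ n) - ξ n‖ ≤ ε n * dM) ∧
    Tendsto (fun n => ‖f (ξ n) - ξ n‖) atTop (𝓝 0) ∧
    (∀ (nm : ℕ → ℕ) (ξs : X), StrictMono nm → ξs ∈ M →
      (∀ φ : X →L[ℝ] ℝ, Tendsto (fun m => φ (ξ (nm m))) atTop (𝓝 (φ ξs))) →
      f ξs = ξs) := by
  have hdiam : ∀ v ∈ M, ∀ w ∈ M, ‖v - w‖ ≤ dM := fun v hv w hw => hdM.1 ⟨v, hv, w, hw, rfl⟩
  have hresidual : ∀ n, ‖f (ξ n) - ξ n‖ ≤ ε n * dM := fun n =>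
    (norm_sub_eq_mul_of_convexComb_eq (hε0 n).le (hfix n)).trans_le
      (mul_le_mul_of_nonneg_left (hdiam _ (hfM _ (hξM n)) _ hz) (hε0 n).le)
  have hresidual_lim : Tendsto (fun n => ‖f (ξ n) - ξ n‖) atTop (𝓝 0) :=
    squeeze_zero (fun _ => norm_nonneg _) hresidual (by simpa using hεlim.mul_const dM)
  refine ⟨hresidual, hresidual_lim, fun nm ξs hnm hξs hweak => ?_⟩
  exact eq_of_opial_of_liminf_le (opial _ ξs hweak (f ξs))
    (hresidual_lim.comp hnm.tendsto_atTop)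
    (isBoundedUnder_of ⟨dM, fun m => hdiam _ (hfM _ (hξM _)) _ (hfM _ hξs)⟩)
    (sharp ξs hξs _ (fun m => hξM _) hweak)

/-- if `ξ_n` is a fixed point of `φ_n(x) = (1-ε_n) f(x) + ε_n z`
with `ε_n → 0`, then `‖f(ξ_n) - ξ_n‖ ≤ ε_n d_M → 0`; moreover any weak
subsequential limit `ξ* ∈ M` of `{ξ_n}` is a fixed point of `f`. -/
theorem stmt_19 {X : Type*} [NormedAddCommGroup X] [NormedSpace ℝ X] [CompleteSpace X]
    (opial : ∀ (u : ℕ → X) (p : X),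
      (∀ φ : X →L[ℝ] ℝ, Tendsto (fun n => φ (u n)) atTop (𝓝 (φ p))) →
      ∀ z, z ≠ p →
        Filter.liminf (fun n => ‖u n - p‖) atTop < Filter.liminf (fun n => ‖u n - z‖) atTop)
    (M : Set X) (hMne : M.Nonempty) (hMb : Bornology.IsBounded M)
    (hMc : IsClosed M) (hMconv : Convex ℝ M)
    (dM : ℝ) (hdM : IsLUB {d : ℝ | ∃ v ∈ M, ∃ w ∈ M, d = ‖v - w‖} dM)
    (f : X → X) (hfM : ∀ x ∈ M, f x ∈ M)
    (sharp : ∀ y ∈ M, ∀ yn : ℕ → X, (∀ n, yn n ∈ M) →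
      (∀ φ : X →L[ℝ] ℝ, Tendsto (fun n => φ (yn n)) atTop (𝓝 (φ y))) →
      Filter.liminf (fun n => ‖f (yn n) - f y‖) atTop ≤
        Filter.liminf (fun n => ‖yn n - y‖) atTop)
    (ε : ℕ → ℝ) (hε0 : ∀ n, 0 < ε n) (hε1 : ∀ n, ε n < 1)
    (hεlim : Tendsto ε atTop (𝓝 0))
    (z : X) (hz : z ∈ M)
    (ξ : ℕ → X) (hξM : ∀ n, ξ n ∈ M)
    (hfix : ∀ n, (1 - ε n) • f (ξ n) + ε n • z = ξ n) :
    (∀ n, ‖f (ξ n) - ξ n‖ ≤ ε n * dM) ∧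
    Tendsto (fun n => ‖f (ξ n) - ξ n‖) atTop (𝓝 0) ∧
    (∀ (nm : ℕ → ℕ) (ξs : X), StrictMono nm → ξs ∈ M →
      (∀ φ : X →L[ℝ] ℝ, Tendsto (fun m => φ (ξ (nm m))) atTop (𝓝 (φ ξs))) →
      f ξs = ξs) :=
  stmt_19_general opial M dM hdM f hfM sharp ε hε0 hεlim z hz ξ hξM hfix
end
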